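/- arXiv:1504.04977 — 10 statements merged into one kernel-verified Lean document; each statement's English description precedes it below -/
import Mathlib

section
/- Let n ≥ 1, let f_0, …, f_n be n+1 polynomials in ℚ[x_0, …, x_{n-1}], and let C be their Dixon cancellation matrix over ℚ[x_0,…,x_{n-1}, x̄_0,…,x̄_{n-1}]. Then the product ∏_{k=0}^{n-1} (x_k − x̄_k) divides det C in ℚ[x_0,…,x_{n-1}, x̄_0,…,x̄_{n-1}]. (Hence the Dixon polynomial θ = det C / ∏_{k}(x_k − x̄_k) is a well-defined polynomial.) -/
open MvPolynomial

/-- The `i`-th Dixon substitution homomorphism `φ_i : ℚ[x] → ℚ[x, x̄]`,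
sending `x_k ↦ x̄_k` for `k < i` and `x_k ↦ x_k` for `k ≥ i`.
Here `Sum.inl k` is the unbarred variable `x_k` and `Sum.inr k` is the barred `x̄_k`. -/
noncomputable def dixonPhi (n : ℕ) (i : Fin (n + 1)) :
    MvPolynomial (Fin n) ℚ →ₐ[ℚ] MvPolynomial (Fin n ⊕ Fin n) ℚ :=
  aeval (fun k : Fin n => if (k : ℕ) < (i : ℕ) then X (Sum.inr k) else X (Sum.inl k))

/-- The Dixon cancellation matrix of `f_0, …, f_n`, with entries `C i j = φ_i (f j)`. -/
noncomputable def dixonCancellationMatrix (n : ℕ)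
    (f : Fin (n + 1) → MvPolynomial (Fin n) ℚ) :
    Matrix (Fin (n + 1)) (Fin (n + 1)) (MvPolynomial (Fin n ⊕ Fin n) ℚ) :=
  fun i j => dixonPhi n i (f j)

/-! Substituting `x̄_k ↦ x_k` makes `φ_k` and `φ_{k+1}` agree, so it makes rows `k` and `k + 1`
of the cancellation matrix equal and kills its determinant. The kernel of this substitution is
the principal ideal generated by `x_k - x̄_k`, so `x_k - x̄_k` divides `det C`; these linear forms
are pairwise non-associated primes, hence their product divides `det C` as well. -/

namespace MvPolynomial

variable {R σ : Type*} [CommRing R] [DecidableEq σ] {a b : σ}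

theorem ker_rename_update_eq_span_X_sub_X :
    RingHom.ker (rename (Function.update id b a) : MvPolynomial σ R →ₐ[R] MvPolynomial σ R) =
      Ideal.span {X a - X b} := by
  set I : Ideal (MvPolynomial σ R) := Ideal.span {X a - X b}
  refine le_antisymm (fun p hp => ?_) ?_
  -- modulo `X a - X b`, the substitution `X b ↦ X a` is the identity
  · have hcomp : (Ideal.Quotient.mkₐ R I).comp (rename (Function.update id b a)) =
        Ideal.Quotient.mkₐ R I := by
      ext v
      by_cases hv : v = b
      · subst hv
        simp [Ideal.Quotient.mkₐ_eq_mk, Ideal.Quotient.eq, I]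
      · simp [hv]
    rw [RingHom.mem_ker] at hp
    rw [← Ideal.Quotient.eq_zero_iff_mem, ← Ideal.Quotient.mkₐ_eq_mk R, ← hcomp,
      AlgHom.comp_apply, hp, map_zero]
  · rw [Ideal.span_singleton_le_iff_mem, RingHom.mem_ker]
    simp [Function.update_apply]

theorem prime_X_sub_X [IsDomain R] (hab : a ≠ b) : Prime (X a - X b : MvPolynomial σ R) := by
  rw [← Ideal.span_singleton_prime (sub_ne_zero.2 (X_injective.ne hab)),
    ← ker_rename_update_eq_span_X_sub_X]
  exact RingHom.ker_isPrime _

theorem isRelPrime_X_sub_X [IsDomain R] {c d : σ} (hab : a ≠ b) (hcd : c ≠ d) (hcb : c ≠ b)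
    (hdb : d ≠ b) : IsRelPrime (X a - X b : MvPolynomial σ R) (X c - X d) := by
  refine (prime_X_sub_X hab).irreducible.isRelPrime_iff_not_dvd.2 fun hdvd => ?_
  rw [← Ideal.mem_span_singleton, ← ker_rename_update_eq_span_X_sub_X, RingHom.mem_ker] at hdvd
  simp [Function.update_of_ne hcb, Function.update_of_ne hdb, sub_eq_zero, hcd] at hdvd

end MvPolynomial

theorem rename_update_comp_dixonPhi_castSucc {n : ℕ} (k : Fin n) :
    (rename (Function.update id (Sum.inr k) (Sum.inl k))).comp (dixonPhi n k.castSucc) =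
      (rename (Function.update id (Sum.inr k) (Sum.inl k))).comp (dixonPhi n k.succ) := by
  ext1 t
  simp only [AlgHom.comp_apply, dixonPhi, aeval_X, Fin.val_castSucc, Fin.val_succ]
  rcases lt_trichotomy t k with h | rfl | h
  · rw [if_pos (Fin.lt_def.1 h), if_pos (by omega)]
  · simp
  · rw [if_neg (by omega), if_neg (by omega)]

theorem X_inl_sub_X_inr_dvd_det_dixonCancellationMatrix {n : ℕ}
    (f : Fin (n + 1) → MvPolynomial (Fin n) ℚ) (k : Fin n) :
    (X (Sum.inl k) - X (Sum.inr k) : MvPolynomial (Fin n ⊕ Fin n) ℚ) ∣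
      (dixonCancellationMatrix n f).det := by
  rw [← Ideal.mem_span_singleton, ← ker_rename_update_eq_span_X_sub_X, RingHom.mem_ker,
    AlgHom.map_det]
  refine Matrix.det_zero_of_row_eq (Fin.castSucc_lt_succ (i := k)).ne (funext fun j => ?_)
  exact DFunLike.congr_fun (rename_update_comp_dixonPhi_castSucc k) (f j)

theorem dixon_prod_dvd_det_general (n : ℕ)
    (f : Fin (n + 1) → MvPolynomial (Fin n) ℚ) :
    (∏ k : Fin n, (X (Sum.inl k) - X (Sum.inr k)) :
        MvPolynomial (Fin n ⊕ Fin n) ℚ) ∣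
      (dixonCancellationMatrix n f).det :=
  Fintype.prod_dvd_of_isRelPrime
    (fun _ _ hij => isRelPrime_X_sub_X Sum.inl_ne_inr Sum.inl_ne_inr Sum.inl_ne_inr
      (Sum.inr_injective.ne hij.symm))
    (X_inl_sub_X_inr_dvd_det_dixonCancellationMatrix f)

/-- The product `∏ (x_k − x̄_k)` divides the determinant of the Dixon
cancellation matrix, so the Dixon polynomial is well defined. -/
theorem dixon_prod_dvd_det (n : ℕ) (hn : 1 ≤ n)
    (f : Fin (n + 1) → MvPolynomial (Fin n) ℚ) :
    (∏ k : Fin n, (X (Sum.inl k) - X (Sum.inr k)) :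
        MvPolynomial (Fin n ⊕ Fin n) ℚ) ∣
      (dixonCancellationMatrix n f).det :=
  dixon_prod_dvd_det_general n f
end

section
/- Let n ≥ 1, let f_0, …, f_n be n+1 polynomials in ℚ[x_0, …, x_{n-1}], and let C be their Dixon cancellation matrix. Then det C lies in the ideal of ℚ[x_0,…,x_{n-1}, x̄_0,…,x̄_{n-1}] generated by the polynomials f_0, …, f_n regarded as polynomials in the unbarred variables (i.e., the images of the f_j under the inclusion ℚ[x_0,…,x_{n-1}] → ℚ[x, x̄]). In particular det C can be written as a linear combination det C = Σ_j K_j f_j with polynomial coefficients K_j. -/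
open MvPolynomial

/-!
For `i = 0` no variable is barred, so `φ_0` is the inclusion of the unbarred variables and the
first row of the Dixon cancellation matrix is `(f_0, …, f_n)` itself. Expanding the determinant
along that row writes it as a combination of the `f_j` with cofactors as coefficients.
-/

theorem Matrix.det_mem_span_row {ι R : Type*} [Fintype ι] [DecidableEq ι] [CommRing R]
    (A : Matrix ι ι R) (i : ι) : A.det ∈ Ideal.span (Set.range (A i)) := by
  rw [Matrix.det_eq_sum_mul_adjugate_row A i]
  exact Ideal.sum_mem _ fun j _ =>
    Ideal.mul_mem_right _ _ (Ideal.subset_span (Set.mem_range_self j))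

theorem dixonPhi_zero (n : ℕ) : dixonPhi n 0 = rename Sum.inl :=
  algHom_ext fun k => by simp [dixonPhi]

theorem dixonCancellationMatrix_zero (n : ℕ) (f : Fin (n + 1) → MvPolynomial (Fin n) ℚ) :
    dixonCancellationMatrix n f 0 = fun j => rename Sum.inl (f j) :=
  funext fun j => by rw [dixonCancellationMatrix, dixonPhi_zero]

theorem dixon_det_mem_span_unbarred_general (n : ℕ)
    (f : Fin (n + 1) → MvPolynomial (Fin n) ℚ) :
    (dixonCancellationMatrix n f).det ∈
      Ideal.span (Set.range fun j : Fin (n + 1) => rename Sum.inl (f j)) := by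
  rw [← dixonCancellationMatrix_zero]
  exact (dixonCancellationMatrix n f).det_mem_span_row 0

/-- The determinant of the Dixon cancellation matrix lies in the ideal generated by
the `f_j` regarded as polynomials in the unbarred variables; in particular it is a
linear combination `det C = Σ_j K_j f_j` with polynomial coefficients. -/
theorem dixon_det_mem_span_unbarred (n : ℕ) (hn : 1 ≤ n)
    (f : Fin (n + 1) → MvPolynomial (Fin n) ℚ) :
    (dixonCancellationMatrix n f).det ∈
      Ideal.span (Set.range fun j : Fin (n + 1) => rename Sum.inl (f j)) :=
  dixon_det_mem_span_unbarred_general n f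
end

section
/- Let n ≥ 1, let f_0, …, f_n be n+1 polynomials in ℚ[x_0, …, x_{n-1}], let C be their Dixon cancellation matrix, and let d : {0,…,n-1} → ℕ be such that for every j and every k the degree of f_j in the variable x_k is at most d_k. Then for every k ∈ {0,…,n-1}, the degree of det C in the unbarred variable x_k is at most (k+1)·d_k. -/
/-!
Expand the determinant over permutations. Row `i` of the cancellation matrix is `φ_i` applied to
the `f_j`, and `φ_i` has already replaced `x_k` by `x̄_k` whenever `k < i`, so only the `k + 1` rows
`i ≤ k` can contain `x_k`, each with degree at most `d_k`. Every permutation picks one entry from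
each row, hence each term of the expansion has degree at most `(k + 1) · d_k` in `x_k`.
-/

open MvPolynomial

namespace MvPolynomial

variable {R σ τ : Type*}

theorem degreeOf_rename_eq_zero [CommSemiring R] {f : σ → τ} {i : τ} (hi : i ∉ Set.range f)
    (p : MvPolynomial σ R) : degreeOf i (rename f p) = 0 := by
  by_contra h
  obtain ⟨j, -, rfl⟩ := mem_vars_rename f p (mem_vars_iff_degreeOf_ne_zero.2 h)
  exact hi ⟨j, rfl⟩

theorem degreeOf_det_le_sum [CommRing R] {ι : Type*} [Fintype ι] [DecidableEq ι] (i : σ)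
    (A : Matrix ι ι (MvPolynomial σ R)) (b : ι → ℕ) (hA : ∀ r c, degreeOf i (A r c) ≤ b r) :
    degreeOf i A.det ≤ ∑ r, b r := by
  rw [Matrix.det_apply']
  refine (degreeOf_sum_le _ _ _).trans (Finset.sup_le fun π _ => ?_)
  calc degreeOf i (((Equiv.Perm.sign π : ℤ) : MvPolynomial σ R) * ∏ c, A (π c) c)
      ≤ degreeOf i (∏ c, A (π c) c) := by
        rw [← map_intCast (C : R →+* MvPolynomial σ R)]
        exact degreeOf_C_mul_le _ _ _
    _ ≤ ∑ c, degreeOf i (A (π c) c) := degreeOf_prod_le _ _ _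
    _ ≤ ∑ c, b (π c) := Finset.sum_le_sum fun c _ => hA _ _
    _ = ∑ r, b r := Equiv.sum_comp π b

end MvPolynomial

theorem Fin.card_filter_val_le {m k : ℕ} (hk : k < m) :
    (Finset.univ.filter fun i : Fin m => (i : ℕ) ≤ k).card = k + 1 := by
  have hIic : (Finset.univ.filter fun i : Fin m => (i : ℕ) ≤ k) = Finset.Iic ⟨k, hk⟩ := by
    ext i
    simp [Fin.le_def]
  rw [hIic, Fin.card_Iic]

def dixonVar (n : ℕ) (i : Fin (n + 1)) (k : Fin n) : Fin n ⊕ Fin n :=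
  if (k : ℕ) < i then Sum.inr k else Sum.inl k

theorem dixonVar_injective (n : ℕ) (i : Fin (n + 1)) : Function.Injective (dixonVar n i) := by
  intro a b hab
  unfold dixonVar at hab
  split_ifs at hab <;> simpa using hab

theorem dixonPhi_eq_rename (n : ℕ) (i : Fin (n + 1)) : dixonPhi n i = rename (dixonVar n i) := by
  ext k
  simp only [dixonPhi, aeval_X, rename_X, dixonVar]
  split_ifs <;> rfl

theorem degreeOf_inl_dixonPhi_of_lt {n : ℕ} {i : Fin (n + 1)} {k : Fin n} (hki : (k : ℕ) < i)
    (p : MvPolynomial (Fin n) ℚ) : degreeOf (Sum.inl k) (dixonPhi n i p) = 0 := by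
  rw [dixonPhi_eq_rename]
  refine degreeOf_rename_eq_zero ?_ p
  rintro ⟨l, hl⟩
  unfold dixonVar at hl
  split_ifs at hl with h
  exact h (Sum.inl_injective hl ▸ hki)

theorem degreeOf_inl_dixonPhi_of_le {n : ℕ} {i : Fin (n + 1)} {k : Fin n} (hik : (i : ℕ) ≤ k)
    (p : MvPolynomial (Fin n) ℚ) : degreeOf (Sum.inl k) (dixonPhi n i p) = degreeOf k p := by
  have hk : dixonVar n i k = Sum.inl k := if_neg (Nat.not_lt.2 hik)
  rw [dixonPhi_eq_rename, ← hk, degreeOf_rename_of_injective (dixonVar_injective n i)]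

theorem dixon_det_degreeOf_unbarred_le_general (n : ℕ)
    (f : Fin (n + 1) → MvPolynomial (Fin n) ℚ) (d : Fin n → ℕ)
    (hd : ∀ j : Fin (n + 1), ∀ k : Fin n, degreeOf k (f j) ≤ d k) :
    ∀ k : Fin n,
      degreeOf (Sum.inl k) (dixonCancellationMatrix n f).det ≤ ((k : ℕ) + 1) * d k := by
  intro k
  have hrow : ∀ i j, degreeOf (Sum.inl k) (dixonCancellationMatrix n f i j)
      ≤ if (i : ℕ) ≤ k then d k else 0 := by
    intro i j
    split_ifs with hik
    · exact (degreeOf_inl_dixonPhi_of_le hik (f j)).trans_le (hd j k)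
    · exact (degreeOf_inl_dixonPhi_of_lt (Nat.lt_of_not_le hik) (f j)).le
  calc degreeOf (Sum.inl k) (dixonCancellationMatrix n f).det
      ≤ ∑ i : Fin (n + 1), if (i : ℕ) ≤ k then d k else 0 := degreeOf_det_le_sum _ _ _ hrow
    _ = ((k : ℕ) + 1) * d k := by
      rw [Finset.sum_ite, Finset.sum_const_zero, add_zero, Finset.sum_const,
        Fin.card_filter_val_le (by omega), smul_eq_mul]

/-- Degree bound in the unbarred variable `x_k` of the determinant of the
Dixon cancellation matrix: at most `(k+1)·d_k`. -/
theorem dixon_det_degreeOf_unbarred_le (n : ℕ) (hn : 1 ≤ n)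
    (f : Fin (n + 1) → MvPolynomial (Fin n) ℚ) (d : Fin n → ℕ)
    (hd : ∀ j : Fin (n + 1), ∀ k : Fin n, degreeOf k (f j) ≤ d k) :
    ∀ k : Fin n,
      degreeOf (Sum.inl k) (dixonCancellationMatrix n f).det ≤ ((k : ℕ) + 1) * d k :=
  dixon_det_degreeOf_unbarred_le_general n f d hd
end

section
/- Let n ≥ 1, let f_0, …, f_n be n+1 polynomials in ℚ[x_0, …, x_{n-1}], let C be their Dixon cancellation matrix, and let d : {0,…,n-1} → ℕ be such that for every j and every k the degree of f_j in the variable x_k is at most d_k. Then for every k ∈ {0,…,n-1}, the degree of det C in the barred variable x̄_k is at most (n−k)·d_k. -/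
open MvPolynomial

/-! Each `φ_i` is an injective renaming of variables which hits `x̄_k` exactly when `k < i`.
Hence row `i` of the cancellation matrix has degree at most `d_k` in `x̄_k` when `k < i`, and
degree `0` otherwise. Every term of the Leibniz expansion of the determinant takes one entry from
each row, so its degree in `x̄_k` is at most `d_k` times the number of rows `i ∈ {k+1, …, n}`,
which is `(n - k) d_k`. -/

namespace MvPolynomial

variable {σ τ R : Type*}

theorem degreeOf_rename_eq_zero_of_notMem_range [CommSemiring R] {f : σ → τ} {j : τ}
    (h : j ∉ Set.range f) (p : MvPolynomial σ R) : degreeOf j (rename f p) = 0 := by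
  by_contra hne
  obtain ⟨i, -, rfl⟩ := mem_vars_rename f p (mem_vars_iff_degreeOf_ne_zero.2 hne)
  exact h ⟨i, rfl⟩

theorem degreeOf_det_le [CommRing R] {ι : Type*} [Fintype ι] [DecidableEq ι]
    (M : Matrix ι ι (MvPolynomial σ R)) (j : σ) (e : ι → ℕ)
    (h : ∀ a b, degreeOf j (M a b) ≤ e a) : degreeOf j M.det ≤ ∑ a, e a := by
  rw [Matrix.det_apply]
  refine (degreeOf_sum_le _ _ _).trans (Finset.sup_le fun π _ => ?_)
  have hsign :
      degreeOf j (Equiv.Perm.sign π • ∏ b, M (π b) b) = degreeOf j (∏ b, M (π b) b) := by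
    obtain hs | hs := Int.units_eq_one_or (Equiv.Perm.sign π) <;> simp [hs, degreeOf_neg]
  calc degreeOf j (Equiv.Perm.sign π • ∏ b, M (π b) b)
      ≤ ∑ b, degreeOf j (M (π b) b) := hsign ▸ degreeOf_prod_le _ _ _
    _ ≤ ∑ b, e (π b) := Finset.sum_le_sum fun b _ => h _ _
    _ = ∑ a, e a := Equiv.sum_comp π e

end MvPolynomial

theorem inr_mem_range_dixonVar_iff (n : ℕ) (i : Fin (n + 1)) (k : Fin n) :
    Sum.inr k ∈ Set.range (dixonVar n i) ↔ (k : ℕ) < i := by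
  constructor
  · rintro ⟨a, ha⟩
    unfold dixonVar at ha
    split_ifs at ha with hlt
    exact Sum.inr_injective ha ▸ hlt
  · exact fun hk => ⟨k, if_pos hk⟩

theorem degreeOf_inr_dixonPhi (n : ℕ) (i : Fin (n + 1)) (p : MvPolynomial (Fin n) ℚ)
    (k : Fin n) :
    degreeOf (Sum.inr k) (dixonPhi n i p) = if (k : ℕ) < i then degreeOf k p else 0 := by
  rw [dixonPhi_eq_rename]
  split_ifs with hk
  · have : Sum.inr k = dixonVar n i k := (if_pos hk).symm
    rw [this, degreeOf_rename_of_injective (dixonVar_injective n i)]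
  · exact degreeOf_rename_eq_zero_of_notMem_range
      (mt (inr_mem_range_dixonVar_iff n i k).1 hk) p

theorem Fin.sum_ite_lt_val (n k c : ℕ) :
    (∑ r : Fin (n + 1), if k < (r : ℕ) then c else 0) = (n - k) * c := by
  rw [Fin.sum_univ_eq_sum_range (fun r => if k < r then c else 0), Finset.sum_ite,
    Finset.sum_const_zero, add_zero, Finset.sum_const, smul_eq_mul]
  congr 1
  rw [← Nat.card_Ioc k n]
  congr 1
  ext r
  simp only [Finset.mem_filter, Finset.mem_range, Finset.mem_Ioc]
  omega

theorem dixon_det_degreeOf_barred_le_general (n : ℕ)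
    (f : Fin (n + 1) → MvPolynomial (Fin n) ℚ) (d : Fin n → ℕ)
    (hd : ∀ j : Fin (n + 1), ∀ k : Fin n, degreeOf k (f j) ≤ d k) :
    ∀ k : Fin n,
      degreeOf (Sum.inr k) (dixonCancellationMatrix n f).det ≤ (n - (k : ℕ)) * d k := by
  intro k
  have hentry : ∀ i j, degreeOf (Sum.inr k) (dixonCancellationMatrix n f i j) ≤
      if (k : ℕ) < i then d k else 0 := by
    intro i j
    rw [dixonCancellationMatrix, degreeOf_inr_dixonPhi]
    split_ifs
    exacts [hd j k, le_rfl]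
  calc _ ≤ _ := degreeOf_det_le _ _ _ hentry
    _ = (n - (k : ℕ)) * d k := Fin.sum_ite_lt_val n k (d k)

/-- Degree bound in the barred variable `x̄_k` of the determinant of the
Dixon cancellation matrix: at most `(n−k)·d_k`. -/
theorem dixon_det_degreeOf_barred_le (n : ℕ) (hn : 1 ≤ n)
    (f : Fin (n + 1) → MvPolynomial (Fin n) ℚ) (d : Fin n → ℕ)
    (hd : ∀ j : Fin (n + 1), ∀ k : Fin n, degreeOf k (f j) ≤ d k) :
    ∀ k : Fin n,
      degreeOf (Sum.inr k) (dixonCancellationMatrix n f).det ≤ (n - (k : ℕ)) * d k :=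
  dixon_det_degreeOf_barred_le_general n f d hd
end

section
/- Let n ≥ 1, let f_0, …, f_n be n+1 polynomials in ℚ[x_0, …, x_{n-1}], let C be their Dixon cancellation matrix, and suppose θ ∈ ℚ[x_0,…,x_{n-1}, x̄_0,…,x̄_{n-1}] satisfies θ · ∏_{k=0}^{n-1}(x_k − x̄_k) = det C. If a ∈ ℚⁿ is a common zero of f_0, …, f_n (i.e., f_j(a) = 0 for all j), then substituting x_k := a_k for every unbarred variable (and keeping the barred variables as variables) sends θ to the zero polynomial of ℚ[x̄_0,…,x̄_{n-1}]. -/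
open MvPolynomial

/-- If `a` is a common zero of `f_0, …, f_n`, then substituting `x_k := a_k` for the
unbarred variables (keeping the barred variables) sends the Dixon polynomial `θ`
to the zero polynomial of `ℚ[x̄]`. -/
theorem dixon_poly_subst_unbarred_eq_zero (n : ℕ) (hn : 1 ≤ n)
    (f : Fin (n + 1) → MvPolynomial (Fin n) ℚ)
    (θ : MvPolynomial (Fin n ⊕ Fin n) ℚ)
    (hθ : θ * ∏ k : Fin n, (X (Sum.inl k) - X (Sum.inr k)) =
        (dixonCancellationMatrix n f).det)
    (a : Fin n → ℚ) (ha : ∀ j : Fin (n + 1), eval a (f j) = 0) :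
    aeval (Sum.elim (fun k : Fin n => (C (a k) : MvPolynomial (Fin n) ℚ))
        (fun k : Fin n => X k)) θ = 0 := by
  set ψ : MvPolynomial (Fin n ⊕ Fin n) ℚ →ₐ[ℚ] MvPolynomial (Fin n) ℚ :=
    aeval (Sum.elim (fun k : Fin n => (C (a k) : MvPolynomial (Fin n) ℚ))
        (fun k : Fin n => X k)) with hψ
  have haev : ∀ p : MvPolynomial (Fin n) ℚ,
      aeval (fun k : Fin n => (C (a k) : MvPolynomial (Fin n) ℚ)) p = C (eval a p) := by
    intro p
    induction p using MvPolynomial.induction_on with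
    | C c => simp [algebraMap_eq]
    | add p q hp hq => simp only [map_add, hp, hq]
    | mul_X p k hp => simp only [map_mul, hp, aeval_X, eval_mul, eval_X]
  have key : ψ ((dixonCancellationMatrix n f).det) = 0 := by
    rw [AlgHom.map_det]
    apply Matrix.det_eq_zero_of_row_eq_zero 0
    intro j
    have hcomp : ψ.comp (dixonPhi n 0) = aeval (fun k : Fin n => (C (a k) : MvPolynomial (Fin n) ℚ)) := by
      apply MvPolynomial.algHom_ext
      intro k
      simp [dixonPhi, hψ]
    have h0 : ψ (dixonPhi n 0 (f j)) = C (eval a (f j)) := by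
      have h := DFunLike.congr_fun hcomp (f j)
      rw [AlgHom.comp_apply] at h
      rw [h, haev]
    show ψ (dixonPhi n 0 (f j)) = 0
    rw [h0, ha j, map_zero]
  rw [← hθ, map_mul, map_prod] at key
  have hprod : ∀ k : Fin n,
      ψ (X (Sum.inl k) - X (Sum.inr k)) = C (a k) - X k := by
    intro k
    simp [hψ]
  rw [Finset.prod_congr rfl fun k _ => hprod k] at key
  have hne : (∏ k : Fin n, (C (a k) - X k : MvPolynomial (Fin n) ℚ)) ≠ 0 := by
    apply Finset.prod_ne_zero_iff.mpr
    intro k _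
    intro h
    have := congrArg (eval fun _ => a k + 1) h
    simp at this
  exact (mul_eq_zero.mp key).resolve_right hne
end

section
/- Let n ≥ 1, let f_0, …, f_n be n+1 polynomials in ℚ[x_0, …, x_{n-1}], let C be their Dixon cancellation matrix, and suppose θ ∈ ℚ[x_0,…,x_{n-1}, x̄_0,…,x̄_{n-1}] satisfies θ · ∏_{k=0}^{n-1}(x_k − x̄_k) = det C. If a ∈ ℚⁿ is a common zero of f_0, …, f_n, then substituting x̄_k := a_k for every barred variable (and keeping the unbarred variables as variables) sends θ to the zero polynomial of ℚ[x_0,…,x_{n-1}]. -/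
open MvPolynomial

lemma aeval_C_comp {n : ℕ} (a : Fin n → ℚ) (p : MvPolynomial (Fin n) ℚ) :
    aeval (fun k : Fin n => (C (a k) : MvPolynomial (Fin n) ℚ)) p = C (eval a p) := by
  have h := MvPolynomial.aeval_algebraMap_apply (MvPolynomial (Fin n) ℚ) a p
  have he : aeval a p = eval a p := by
    rw [← coe_aeval_eq_eval]; rfl
  simpa [Function.comp_def, algebraMap_eq, he] using h

/-- If `a` is a common zero of `f_0, …, f_n`, then substituting `x̄_k := a_k` for the
barred variables (keeping the unbarred variables) sends the Dixon polynomial `θ`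
to the zero polynomial of `ℚ[x]`. -/
theorem dixon_poly_subst_barred_eq_zero (n : ℕ) (hn : 1 ≤ n)
    (f : Fin (n + 1) → MvPolynomial (Fin n) ℚ)
    (θ : MvPolynomial (Fin n ⊕ Fin n) ℚ)
    (hθ : θ * ∏ k : Fin n, (X (Sum.inl k) - X (Sum.inr k)) =
        (dixonCancellationMatrix n f).det)
    (a : Fin n → ℚ) (ha : ∀ j : Fin (n + 1), eval a (f j) = 0) :
    aeval (Sum.elim (fun k : Fin n => (X k : MvPolynomial (Fin n) ℚ))
        (fun k : Fin n => C (a k))) θ = 0 := by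
  set ψ : MvPolynomial (Fin n ⊕ Fin n) ℚ →ₐ[ℚ] MvPolynomial (Fin n) ℚ :=
    aeval (Sum.elim (fun k : Fin n => (X k : MvPolynomial (Fin n) ℚ))
        (fun k : Fin n => C (a k))) with hψ
  have h := congrArg ψ hθ
  rw [map_mul, map_prod] at h
  have hdet : ψ ((dixonCancellationMatrix n f).det) =
      ((dixonCancellationMatrix n f).map ψ).det := by
    exact (RingHom.map_det ψ.toRingHom _).trans rfl
  rw [hdet] at h
  have hrow : ∀ j, ((dixonCancellationMatrix n f).map ψ) (Fin.last n) j = 0 := by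
    intro j
    have : ψ (dixonPhi n (Fin.last n) (f j)) = C (eval a (f j)) := by
      rw [dixonPhi, ← AlgHom.comp_apply, comp_aeval]
      have : (fun k : Fin n => ψ (if (k : ℕ) < ((Fin.last n : Fin (n+1)) : ℕ)
          then X (Sum.inr k) else X (Sum.inl k))) =
          fun k : Fin n => (C (a k) : MvPolynomial (Fin n) ℚ) := by
        funext k
        rw [if_pos (by simpa using k.isLt)]
        simp [hψ]
      rw [this, aeval_C_comp]
    simp only [Matrix.map_apply, dixonCancellationMatrix, this, ha j, map_zero]
  have hdet0 : ((dixonCancellationMatrix n f).map ψ).det = 0 :=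
    Matrix.det_eq_zero_of_row_eq_zero (Fin.last n) hrow
  rw [hdet0] at h
  have hne : (∏ k : Fin n, ψ (X (Sum.inl k) - X (Sum.inr k))) ≠ 0 := by
    apply Finset.prod_ne_zero_iff.mpr
    intro k _
    have : ψ (X (Sum.inl k) - X (Sum.inr k)) = X k - C (a k) := by
      simp [hψ]
    rw [this]
    intro hzero
    have := congrArg (eval fun _ => a k + 1) hzero
    simp at this
  rcases mul_eq_zero.mp h with h0 | h0
  · exact h0
  · exact absurd h0 hne
end

section
/- Let n ≥ 1, let f_0, …, f_n be n+1 polynomials in ℚ[x_0, …, x_{n-1}], let C be their Dixon cancellation matrix, and suppose θ ∈ ℚ[x_0,…,x_{n-1}, x̄_0,…,x̄_{n-1}] satisfies θ · ∏_{k=0}^{n-1}(x_k − x̄_k) = det C. Let S be a finite type, let e, g : S → (ℕ-valued exponent vectors on the n variables, i.e., Fin n →₀ ℕ) with g injective, and suppose there is s₀ ∈ S with e(s₀) = 0. Let D be an S×S matrix over ℚ (a square Dixon matrix of f) such that θ = Σ_{s,t ∈ S} D_{s,t} · x^{e(s)} · x̄^{g(t)}, where x^{e(s)} denotes the monomial in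 the unbarred variables with exponent vector e(s) and x̄^{g(t)} the monomial in the barred variables with exponent vector g(t). If the polynomials f_0, …, f_n have a common zero a ∈ ℚⁿ, then det D = 0. (Vanishing of the Dixon resultant is a necessary condition for a common affine solution.) -/
open MvPolynomial

lemma aux_aeval_C (n : ℕ) (a : Fin n → ℚ) (p : MvPolynomial (Fin n) ℚ) :
    aeval (fun k => (C (a k) : MvPolynomial (Fin n) ℚ)) p = C (eval a p) := by
  induction p using MvPolynomial.induction_on with
  | C c => rw [aeval_C, eval_C]; rfl
  | add p q hp hq => rw [map_add, hp, hq, map_add, map_add]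
  | mul_X p k hp => rw [map_mul, aeval_X, hp, map_mul, eval_X, C_mul]

/-- Vanishing of the Dixon resultant is a necessary condition for a common affine
solution: if `θ = Σ_{s,t} D_{s,t} x^{e s} x̄^{g t}` with `g` injective and `e s₀ = 0`,
and the `f_j` have a common zero, then `det D = 0`. -/
theorem dixon_resultant_eq_zero_of_common_zero (n : ℕ) (hn : 1 ≤ n)
    (f : Fin (n + 1) → MvPolynomial (Fin n) ℚ)
    (θ : MvPolynomial (Fin n ⊕ Fin n) ℚ)
    (hθ : θ * ∏ k : Fin n, (X (Sum.inl k) - X (Sum.inr k)) =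
        (dixonCancellationMatrix n f).det)
    (S : Type) [Fintype S] [DecidableEq S]
    (e g : S → (Fin n →₀ ℕ)) (hg : Function.Injective g)
    (s₀ : S) (hs₀ : e s₀ = 0)
    (D : Matrix S S ℚ)
    (hD : θ = ∑ s : S, ∑ t : S,
        monomial ((e s).mapDomain Sum.inl + (g t).mapDomain Sum.inr) (D s t))
    (hcz : ∃ a : Fin n → ℚ, ∀ j : Fin (n + 1), eval a (f j) = 0) :
    D.det = 0 := by
  obtain ⟨a, ha⟩ := hcz
  set ψ : MvPolynomial (Fin n ⊕ Fin n) ℚ →ₐ[ℚ] MvPolynomial (Fin n) ℚ :=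
    aeval (Sum.elim (fun k => C (a k)) X) with hψdef
  -- Row 0 of ψ ∘ C is zero
  have hrow0 : ∀ j, ψ (dixonCancellationMatrix n f 0 j) = 0 := by
    intro j
    show ψ (dixonPhi n 0 (f j)) = 0
    have h1 : ψ (dixonPhi n 0 (f j)) =
        aeval (fun k => (C (a k) : MvPolynomial (Fin n) ℚ)) (f j) := by
      rw [← AlgHom.comp_apply]
      unfold dixonPhi
      rw [comp_aeval]
      have hf : (fun i : Fin n => ψ (if (i:ℕ) < ((0 : Fin (n+1)):ℕ) then X (Sum.inr i) else X (Sum.inl i)))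
          = fun k => (C (a k) : MvPolynomial (Fin n) ℚ) := by
        funext k
        simp [hψdef]
      rw [hf]
    rw [h1, aux_aeval_C, ha j, map_zero]
  have hdet0 : ψ ((dixonCancellationMatrix n f).det) = 0 := by
    rw [show ψ ((dixonCancellationMatrix n f).det) =
        ((dixonCancellationMatrix n f).map ψ).det from RingHom.map_det _ _]
    apply Matrix.det_eq_zero_of_row_eq_zero 0
    intro j
    simpa [Matrix.map_apply] using hrow0 j
  -- apply ψ to hθ
  have key : ψ θ * ∏ k : Fin n, (C (a k) - X k : MvPolynomial (Fin n) ℚ) = 0 := by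
    have := congrArg ψ hθ
    rw [map_mul, map_prod, hdet0] at this
    simpa [hψdef] using this
  have hprodne : (∏ k : Fin n, (C (a k) - X k : MvPolynomial (Fin n) ℚ)) ≠ 0 := by
    rw [Finset.prod_ne_zero_iff]
    intro k _ h
    have hne : ¬ (0 : Fin n →₀ ℕ) = Finsupp.single k 1 := fun h' =>
      one_ne_zero (Finsupp.single_eq_zero.mp h'.symm)
    have h2 := congrArg (coeff (Finsupp.single k 1)) h
    rw [coeff_sub, coeff_X, coeff_C, if_neg hne, coeff_zero] at h2
    norm_num at h2
  have hψθ : ψ θ = 0 := by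
    rcases mul_eq_zero.mp key with h | h
    · exact h
    · exact absurd h hprodne
  -- compute ψ θ from hD
  set v : S → ℚ := fun s => (e s).prod fun k m => a k ^ m with hv
  have hmono : ∀ s t : S,
      ψ (monomial ((e s).mapDomain Sum.inl + (g t).mapDomain Sum.inr) (D s t)) =
        monomial (g t) (D s t * v s) := by
    intro s t
    rw [hψdef, aeval_monomial, Finsupp.prod_add_index' (fun _ => pow_zero _)
      (fun _ _ _ => pow_add _ _ _)]
    rw [Finsupp.prod_mapDomain_index_inj Sum.inl_injective,
        Finsupp.prod_mapDomain_index_inj Sum.inr_injective]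
    have h1 : ((e s).prod fun k m => (Sum.elim (fun k => (C (a k) : MvPolynomial (Fin n) ℚ)) X (Sum.inl k)) ^ m)
        = C (v s) := by
      simp only [Sum.elim_inl, Finsupp.prod, ← C_pow, ← map_prod, hv]
    have h2 : ((g t).prod fun k m => (Sum.elim (fun k => (C (a k) : MvPolynomial (Fin n) ℚ)) X (Sum.inr k)) ^ m)
        = monomial (g t) 1 := by
      simp only [Sum.elim_inr]
      rw [monomial_eq, map_one, one_mul]
    rw [h1, h2]
    have h3 : (algebraMap ℚ (MvPolynomial (Fin n) ℚ)) (D s t) = C (D s t) := rfl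
    rw [h3, ← mul_assoc, ← C_mul, C_mul_monomial, mul_one]
  have hcol : ∀ t₀ : S, (∑ s : S, D s t₀ * v s) = 0 := by
    intro t₀
    have h4 : coeff (g t₀) (ψ θ) = ∑ s : S, D s t₀ * v s := by
      rw [hD, map_sum]
      simp only [map_sum, hmono, coeff_sum, coeff_monomial, hg.eq_iff]
      simp
    rw [hψθ, coeff_zero] at h4
    exact h4.symm
  have hvec : Matrix.vecMul v D = 0 := by
    funext t
    simpa [Matrix.vecMul, dotProduct, mul_comm] using hcol t
  by_contra hdet
  have hv0 := Matrix.eq_zero_of_vecMul_eq_zero hdet hvec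
  have hvs₀ : v s₀ = 1 := by simp [hv, hs₀, Finsupp.prod_zero_index]
  rw [hv0] at hvs₀
  exact one_ne_zero hvs₀.symm
end

section
/- Let η ∈ ℝ, let p₁ : ℝ → ℝ be any function, let p₂ : ℝ → ℝ be differentiable, and let y₁, y₂ : ℝ → ℝ be differentiable functions satisfying, for all t ∈ ℝ, the Gear index-two DAE: y₁'(t) + (1+η)·y₂(t) + η·t·y₂'(t) = p₁(t) and y₁(t) + η·t·y₂(t) = p₂(t). Then for all t ∈ ℝ, y₁(t) = p₂(t) − η·t·(p₁(t) − p₂'(t)). -/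
/-- For solutions of the Gear index-two DAE
`y₁' + (1+η)y₂ + η t y₂' = p₁`, `y₁ + η t y₂ = p₂`,
the variable `y₁` is determined by `y₁ = p₂ − η t (p₁ − p₂')`. -/
theorem gear_dae_y₁ (η : ℝ) (p₁ p₂ y₁ y₂ : ℝ → ℝ)
    (hp₂ : Differentiable ℝ p₂)
    (hy₁ : Differentiable ℝ y₁) (hy₂ : Differentiable ℝ y₂)
    (h1 : ∀ t : ℝ, deriv y₁ t + (1 + η) * y₂ t + η * t * deriv y₂ t = p₁ t)
    (h2 : ∀ t : ℝ, y₁ t + η * t * y₂ t = p₂ t) :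
    ∀ t : ℝ, y₁ t = p₂ t - η * t * (p₁ t - deriv p₂ t) := by
  intro t
  have hd : HasDerivAt p₂ (deriv y₁ t + (η * y₂ t + η * t * deriv y₂ t)) t := by
    have : HasDerivAt (fun t => y₁ t + η * t * y₂ t)
        (deriv y₁ t + ((η * 1) * y₂ t + (η * t) * deriv y₂ t)) t :=
      ((hy₁ t).hasDerivAt).add
        ((((hasDerivAt_id t).const_mul η).mul (hy₂ t).hasDerivAt))
    simpa [funext h2, mul_one] using this
  have hp2' : deriv p₂ t = deriv y₁ t + (η * y₂ t + η * t * deriv y₂ t) := hd.deriv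
  have := h1 t
  have := h2 t
  rw [hp2']
  linear_combination h2 t - η * t * h1 t
end

section
/- Let g, L ∈ ℝ, let λ : ℝ → ℝ be any function, and let y₁, y₂ : ℝ → ℝ be twice differentiable functions satisfying, for all t ∈ ℝ, the pendulum DAE: y₁''(t) + y₁(t)·λ(t) = 0, y₂''(t) + y₂(t)·λ(t) − g = 0, and y₁(t)² + y₂(t)² = L². Then y₂ satisfies the differential algebraic resultant equation: for all t ∈ ℝ, (L⁴ − L²·y₂(t)²)·y₂''(t) + L²·y₂'(t)²·y₂(t) − g·y₂(t)⁴ + 2g·L²·y₂(t)² − g·L⁴ = 0. -/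
/-- For solutions of the simple pendulum DAE, `y₂` satisfies the differential
algebraic resultant `(L⁴ − L²y₂²)y₂'' + L²y₂'²y₂ − gy₂⁴ + 2gL²y₂² − gL⁴ = 0`. -/
theorem pendulum_dae_resultant_y₂ (g L : ℝ) (lam y₁ y₂ : ℝ → ℝ)
    (hy₁ : Differentiable ℝ y₁) (hy₁' : Differentiable ℝ (deriv y₁))
    (hy₂ : Differentiable ℝ y₂) (hy₂' : Differentiable ℝ (deriv y₂))
    (h1 : ∀ t : ℝ, deriv (deriv y₁) t + y₁ t * lam t = 0)
    (h2 : ∀ t : ℝ, deriv (deriv y₂) t + y₂ t * lam t - g = 0)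
    (h3 : ∀ t : ℝ, y₁ t ^ 2 + y₂ t ^ 2 = L ^ 2) :
    ∀ t : ℝ, (L ^ 4 - L ^ 2 * y₂ t ^ 2) * deriv (deriv y₂) t
        + L ^ 2 * deriv y₂ t ^ 2 * y₂ t
        - g * y₂ t ^ 4 + 2 * g * L ^ 2 * y₂ t ^ 2 - g * L ^ 4 = 0 := by
  have hconst : (fun t => y₁ t ^ 2 + y₂ t ^ 2) = fun _ : ℝ => L ^ 2 := funext h3
  have e4 : ∀ t : ℝ, y₁ t * deriv y₁ t + y₂ t * deriv y₂ t = 0 := by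
    intro t
    have hd : HasDerivAt (fun t => y₁ t ^ 2 + y₂ t ^ 2)
        (2 * y₁ t ^ 1 * deriv y₁ t + 2 * y₂ t ^ 1 * deriv y₂ t) t := by
      exact (((hy₁ t).hasDerivAt.pow 2).add ((hy₂ t).hasDerivAt.pow 2)).congr_deriv (by norm_num)
    have := hd.deriv
    rw [hconst] at this
    simp at this
    nlinarith [this]
  have hfun : (fun t => y₁ t * deriv y₁ t + y₂ t * deriv y₂ t) = fun _ : ℝ => (0 : ℝ) :=
    funext e4
  have e5 : ∀ t : ℝ, deriv y₁ t ^ 2 + y₁ t * deriv (deriv y₁) t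
      + deriv y₂ t ^ 2 + y₂ t * deriv (deriv y₂) t = 0 := by
    intro t
    have hd : HasDerivAt (fun t => y₁ t * deriv y₁ t + y₂ t * deriv y₂ t)
        (deriv y₁ t ^ 2 + y₁ t * deriv (deriv y₁) t
          + deriv y₂ t ^ 2 + y₂ t * deriv (deriv y₂) t) t := by
      exact (((hy₁ t).hasDerivAt.mul (hy₁' t).hasDerivAt).add
        ((hy₂ t).hasDerivAt.mul (hy₂' t).hasDerivAt)).congr_deriv (by ring)
    have := hd.deriv
    rw [hfun] at this
    simp only [deriv_const'] at this
    linarith [this]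
  intro t
  set a := y₁ t
  set b := y₂ t
  set p := deriv y₁ t
  set q := deriv y₂ t
  set A := deriv (deriv y₁) t
  set B := deriv (deriv y₂) t
  set l := lam t
  linarith [mul_self_nonneg (0:ℝ),
    show (L ^ 4 - L ^ 2 * b ^ 2) * B + L ^ 2 * q ^ 2 * b - g * b ^ 4
        + 2 * g * L ^ 2 * b ^ 2 - g * L ^ 4 = 0 by
      linear_combination (L ^ 2 - b ^ 2) ^ 2 * h2 t
        - a * b * (L ^ 2 - b ^ 2) * h1 t
        + b * (L ^ 2 - b ^ 2) * e5 t
        + (b * p ^ 2 + l * b * (L ^ 2 - b ^ 2)) * h3 t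
        - b * (a * p - b * q) * e4 t]
end

section
/- Let g, L ∈ ℝ, let λ : ℝ → ℝ be any function, and let y₁, y₂ : ℝ → ℝ be twice differentiable functions satisfying, for all t ∈ ℝ, the pendulum DAE: y₁''(t) + y₁(t)·λ(t) = 0, y₂''(t) + y₂(t)·λ(t) − g = 0, and y₁(t)² + y₂(t)² = L². Then y₁ satisfies the differential algebraic resultant equation: for all t ∈ ℝ, (L⁸ − 2L⁶·y₁(t)² + L⁴·y₁(t)⁴)·y₁''(t)² + (2L⁶·y₁(t) − 2L⁴·y₁(t)³)·y₁'(t)²·y₁''(t) + L⁴·y₁(t)²·y₁'(t)⁴ + 3g²L⁴·y₁(t)⁴ + g²·y₁(t)⁸ − 3g²L²·y₁(t)⁶ − g²L⁶·y₁(t)² = 0. -/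
/-- For solutions of the simple pendulum DAE, `y₁` satisfies the differential
algebraic resultant
`(L⁸ − 2L⁶y₁² + L⁴y₁⁴)y₁''² + (2L⁶y₁ − 2L⁴y₁³)y₁'²y₁'' + L⁴y₁²y₁'⁴
  + 3g²L⁴y₁⁴ + g²y₁⁸ − 3g²L²y₁⁶ − g²L⁶y₁² = 0`. -/
theorem pendulum_dae_resultant_y₁ (g L : ℝ) (lam y₁ y₂ : ℝ → ℝ)
    (hy₁ : Differentiable ℝ y₁) (hy₁' : Differentiable ℝ (deriv y₁))
    (hy₂ : Differentiable ℝ y₂) (hy₂' : Differentiable ℝ (deriv y₂))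
    (h1 : ∀ t : ℝ, deriv (deriv y₁) t + y₁ t * lam t = 0)
    (h2 : ∀ t : ℝ, deriv (deriv y₂) t + y₂ t * lam t - g = 0)
    (h3 : ∀ t : ℝ, y₁ t ^ 2 + y₂ t ^ 2 = L ^ 2) :
    ∀ t : ℝ,
      (L ^ 8 - 2 * L ^ 6 * y₁ t ^ 2 + L ^ 4 * y₁ t ^ 4) * deriv (deriv y₁) t ^ 2
        + (2 * L ^ 6 * y₁ t - 2 * L ^ 4 * y₁ t ^ 3) * deriv y₁ t ^ 2 * deriv (deriv y₁) t
        + L ^ 4 * y₁ t ^ 2 * deriv y₁ t ^ 4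
        + 3 * g ^ 2 * L ^ 4 * y₁ t ^ 4 + g ^ 2 * y₁ t ^ 8
        - 3 * g ^ 2 * L ^ 2 * y₁ t ^ 6 - g ^ 2 * L ^ 6 * y₁ t ^ 2 = 0 := by
  -- first derivative of the constraint
  have c1 : ∀ s : ℝ, y₁ s * deriv y₁ s + y₂ s * deriv y₂ s = 0 := by
    intro s
    have hd : HasDerivAt (fun u => y₁ u ^ 2 + y₂ u ^ 2)
        (2 * y₁ s ^ 1 * deriv y₁ s + 2 * y₂ s ^ 1 * deriv y₂ s) s := by
      exact_mod_cast ((hy₁ s).hasDerivAt.pow 2).add ((hy₂ s).hasDerivAt.pow 2)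
    have hc : (fun u : ℝ => y₁ u ^ 2 + y₂ u ^ 2) = fun _ => L ^ 2 := funext h3
    rw [hc] at hd
    have h0 := (hasDerivAt_const s (L ^ 2)).unique hd
    simp only [pow_one] at h0
    linarith
  intro t
  -- second derivative of the constraint
  have c2 : deriv y₁ t ^ 2 + y₁ t * deriv (deriv y₁) t
      + deriv y₂ t ^ 2 + y₂ t * deriv (deriv y₂) t = 0 := by
    have hd : HasDerivAt (fun u => y₁ u * deriv y₁ u + y₂ u * deriv y₂ u)
        (deriv y₁ t * deriv y₁ t + y₁ t * deriv (deriv y₁) t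
          + (deriv y₂ t * deriv y₂ t + y₂ t * deriv (deriv y₂) t)) t :=
      ((hy₁ t).hasDerivAt.mul (hy₁' t).hasDerivAt).add
        ((hy₂ t).hasDerivAt.mul (hy₂' t).hasDerivAt)
    have hc : (fun u : ℝ => y₁ u * deriv y₁ u + y₂ u * deriv y₂ u) = fun _ => 0 :=
      funext c1
    rw [hc] at hd
    have h0 := (hasDerivAt_const t (0 : ℝ)).unique hd
    nlinarith [h0]
  -- solve for lam * L²
  have lamL2 : lam t * L ^ 2 = deriv y₁ t ^ 2 + deriv y₂ t ^ 2 + g * y₂ t := by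
    linear_combination (-1 : ℝ) * c2 + y₁ t * h1 t + y₂ t * h2 t - lam t * h3 t
  -- key identity
  have key : L ^ 2 * (y₂ t ^ 2 * deriv (deriv y₁) t + y₁ t * deriv y₁ t ^ 2)
      = -(g * y₁ t * y₂ t ^ 3) := by
    linear_combination (L ^ 2 * y₂ t ^ 2) * h1 t - (y₁ t * y₂ t ^ 2) * lamL2
      + (y₁ t * (y₁ t * deriv y₁ t - y₂ t * deriv y₂ t)) * c1 t
      - (y₁ t * deriv y₁ t ^ 2) * h3 t
  have hG : L ^ 4 * (y₂ t ^ 2 * deriv (deriv y₁) t + y₁ t * deriv y₁ t ^ 2) ^ 2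
      - g ^ 2 * y₁ t ^ 2 * (y₂ t ^ 2) ^ 3 = 0 := by
    linear_combination (L ^ 2 * (y₂ t ^ 2 * deriv (deriv y₁) t + y₁ t * deriv y₁ t ^ 2)
      - g * y₁ t * y₂ t ^ 3) * key
  have h3' : y₂ t ^ 2 = L ^ 2 - y₁ t ^ 2 := by linarith [h3 t]
  rw [h3'] at hG
  linear_combination hG
end
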